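/- Let X be a d-complex, k ≤ d, A ⊆ X(k) and 0 < η < 1. If ‖A‖ < η^{2^{k+1}}, then the unique (−1)-face, the empty set, is not a fat face: ∅ ∉ S_η^{−1}(A). -/

import Mathlib

/-!
Averaging the link norms `‖I_σ(B)‖_σ` over the faces `σ ∈ X(i-1)`, weighted by `w(σ)`,
recovers `‖B‖` for any `B ⊆ X(i)`, because `w(σ) · w_σ(ρ \ σ) = w(ρ) / (i + 1)` and every
`i`-face has `i + 1` facets. By Markov's inequality `‖S_η^{i-1}(A)‖ · η^{2^{k-i}} ≤ ‖S_η^i(A)‖`,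
and iterating from `S_η^k(A) = A` gives `‖S_η^0(A)‖ · η^{2^k} ≤ η ‖A‖`. If `∅` were fat, then
`‖S_η^0(A)‖ ≥ η^{2^k}`, so `η^{2^{k+1}} ≤ η ‖A‖ ≤ ‖A‖`.
-/

open Finset
open scoped symmDiff

noncomputable section

namespace HDExpansion

/-- The faces of cardinality `m` (i.e. of dimension `m - 1`) of a complex `X`. -/
def facesC (X : Finset (Finset ℕ)) (m : ℕ) : Finset (Finset ℕ) :=
  X.filter fun σ => σ.card = m

/-- `X` is a finite, pure, `d`-dimensional abstract simplicial complex: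
it is nonempty, closed under subsets, and every face is contained in a face
of cardinality `d + 1`. -/
def IsComplex (X : Finset (Finset ℕ)) (d : ℕ) : Prop :=
  X.Nonempty ∧ (∀ σ ∈ X, ∀ τ ⊆ σ, τ ∈ X) ∧
    ∀ σ ∈ X, ∃ F ∈ X, σ ⊆ F ∧ F.card = d + 1

/-- The weight of a face `σ` in the `d`-complex `X`:
`w(σ) = |{F ∈ X(d) : σ ⊆ F}| / (binom(d+1,|σ|)·|X(d)|)`. -/
def weightC (X : Finset (Finset ℕ)) (d : ℕ) (σ : Finset ℕ) : ℝ :=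
  (((facesC X (d + 1)).filter fun F => σ ⊆ F).card : ℝ) /
    (((d + 1).choose σ.card * (facesC X (d + 1)).card : ℕ) : ℝ)

/-- The norm of a cochain: `‖A‖ = Σ_{σ∈A} w(σ)`. -/
def normC (X : Finset (Finset ℕ)) (d : ℕ) (A : Finset (Finset ℕ)) : ℝ :=
  ∑ σ ∈ A, weightC X d σ

/-- The coboundary map, sending a cochain of faces of cardinality `m`
(dimension `m-1`) to the set of faces of cardinality `m+1` containing an odd
number of its elements. -/
def cobC (X : Finset (Finset ℕ)) (m : ℕ) (A : Finset (Finset ℕ)) : Finset (Finset ℕ) :=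
  (facesC X (m + 1)).filter fun τ => (A.filter fun σ => σ ⊆ τ).card % 2 = 1

/-- `A` (a cochain of faces of cardinality `m`, i.e. dimension `m-1`) is a
coboundary: `A ∈ B^{m-1}`. -/
def IsCobound (X : Finset (Finset ℕ)) (m : ℕ) (A : Finset (Finset ℕ)) : Prop :=
  ∃ γ ⊆ facesC X (m - 1), cobC X (m - 1) γ = A

/-- `A` (a cochain of faces of cardinality `m`, i.e. dimension `m-1`) is a
cocycle: `A ∈ Z^{m-1}`. -/
def IsCocycle (X : Finset (Finset ℕ)) (m : ℕ) (A : Finset (Finset ℕ)) : Prop :=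
  A ⊆ facesC X m ∧ cobC X m A = ∅

/-- `min_{b ∈ B^{m-1}} ‖A + b‖` (cochain sum is symmetric difference `∆`). -/
def distB (X : Finset (Finset ℕ)) (d m : ℕ) (A : Finset (Finset ℕ)) : ℝ :=
  sInf {r : ℝ | ∃ b, IsCobound X m b ∧ r = normC X d (A ∆ b)}

/-- `min_{z ∈ Z^{m-1}} ‖A + z‖` (cochain sum is symmetric difference `∆`). -/
def distZ (X : Finset (Finset ℕ)) (d m : ℕ) (A : Finset (Finset ℕ)) : ℝ :=
  sInf {r : ℝ | ∃ z, IsCocycle X m z ∧ r = normC X d (A ∆ z)}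

/-- The link `X_σ = {τ : σ ∩ τ = ∅, σ ∪ τ ∈ X}`. -/
def link (X : Finset (Finset ℕ)) (σ : Finset ℕ) : Finset (Finset ℕ) :=
  (X.filter fun ρ => σ ⊆ ρ).image fun ρ => ρ \ σ

/-- The localization `I_σ(A) = {τ ∈ X_σ : τ ∪ σ ∈ A}`. -/
def locF (σ : Finset ℕ) (A : Finset (Finset ℕ)) : Finset (Finset ℕ) :=
  (A.filter fun ρ => σ ⊆ ρ).image fun ρ => ρ \ σ

/-- The lifting `I^σ(A) = {τ ∪ σ : τ ∈ A}`. -/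
def liftF (σ : Finset ℕ) (A : Finset (Finset ℕ)) : Finset (Finset ℕ) :=
  A.image fun τ => τ ∪ σ

/-- A cochain of faces of cardinality `m` is minimal if `‖A‖ ≤ ‖A + b‖` for
every coboundary `b`. -/
def IsMinimal (Y : Finset (Finset ℕ)) (dY m : ℕ) (A : Finset (Finset ℕ)) : Prop :=
  ∀ b, IsCobound Y m b → normC Y dY A ≤ normC Y dY (A ∆ b)

/-- A cochain of faces of cardinality `m` is locally minimal if all its
localizations to links of nonempty faces are minimal. -/
def IsLocallyMinimal (X : Finset (Finset ℕ)) (d m : ℕ) (A : Finset (Finset ℕ)) : Prop :=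
  ∀ σ ∈ X, σ ≠ ∅ → IsMinimal (link X σ) (d - σ.card) (m - σ.card) (locF σ A)

/-- `Y` (a `dY`-complex) is a `β`-coboundary expander: for every dimension
`k = m - 1` with `0 ≤ k ≤ dY - 1` and every `k`-cochain `A ∉ B^k`,
`‖δA‖ ≥ β · min_{b ∈ B^k} ‖A+b‖`. -/
def CobExpander (Y : Finset (Finset ℕ)) (dY : ℕ) (β : ℝ) : Prop :=
  ∀ m : ℕ, 1 ≤ m → m ≤ dY → ∀ A ⊆ facesC Y m, ¬ IsCobound Y m A →
    β * distB Y dY m A ≤ normC Y dY (cobC Y m A)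

/-- `E(A,A)`: the edges of `Y` with both vertices in the vertex set `A`
(vertices are identified with singleton faces). -/
def edgesIn (Y : Finset (Finset ℕ)) (A : Finset (Finset ℕ)) : Finset (Finset ℕ) :=
  (facesC Y 2).filter fun e => ∀ v ∈ e, ({v} : Finset ℕ) ∈ A

/-- `Y` (a `dY`-complex) is an `α`-skeleton expander. -/
def SkelExpander (Y : Finset (Finset ℕ)) (dY : ℕ) (α : ℝ) : Prop :=
  ∀ A ⊆ facesC Y 1, normC Y dY (edgesIn Y A) ≤ 4 * (normC Y dY A ^ 2 + α * normC Y dY A)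

/-- The `m`-skeleton of a complex (all faces of dimension at most `m`). -/
def skeleton (X : Finset (Finset ℕ)) (m : ℕ) : Finset (Finset ℕ) :=
  X.filter fun σ => σ.card ≤ m + 1

open scoped Classical in
/-- `fatD X d kc η A j` is the set of fat faces `S_η^{k-j}(A)` where `kc = k+1`
is the cardinality of the faces of `A` (downward induction on `j`). -/
def fatD (X : Finset (Finset ℕ)) (d kc : ℕ) (η : ℝ) (A : Finset (Finset ℕ)) :
    ℕ → Finset (Finset ℕ)
  | 0 => A
  | j + 1 =>
    (facesC X (kc - (j + 1))).filter fun σ =>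
      η ^ 2 ^ j ≤ normC (link X σ) (d - σ.card) (locF σ (fatD X d kc η A j))

/-- The fat faces `S_η^i(A)` of dimension `i` (with `-1 ≤ i ≤ k`), for a
`k`-dimensional cochain `A` of the `d`-complex `X`. -/
def fatS (X : Finset (Finset ℕ)) (d k : ℕ) (η : ℝ) (A : Finset (Finset ℕ)) (i : ℤ) :
    Finset (Finset ℕ) :=
  fatD X d (k + 1) η A ((k : ℤ) - i).toNat

open scoped Classical in
/-- The fat ladders `L_η(A,σ)` sitting on a fat `i`-face `σ`. -/
def ladderL (X : Finset (Finset ℕ)) (d k : ℕ) (η : ℝ) (A : Finset (Finset ℕ))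
    (i : ℤ) (σ : Finset ℕ) : Finset (Finset ℕ) :=
  A.filter fun t => ∃ c : ℤ → Finset ℕ, c i = σ ∧ c (k : ℤ) = t ∧
    (∀ j : ℤ, i ≤ j → j ≤ (k : ℤ) → c j ∈ fatS X d k η A j) ∧
    (∀ j : ℤ, i ≤ j → j < (k : ℤ) → c j ⊆ c (j + 1))

/-- The `i`-fat-ladders `L_η(A,i) = ⋃_{σ ∈ S_η^i(A)} L_η(A,σ)`. -/
def ladderAll (X : Finset (Finset ℕ)) (d k : ℕ) (η : ℝ) (A : Finset (Finset ℕ))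
    (i : ℤ) : Finset (Finset ℕ) :=
  (fatS X d k η A i).biUnion fun σ => ladderL X d k η A i σ

open scoped Classical in
/-- The degenerate faces `Υ_η(A)`: the `(k+1)`-dimensional faces containing a
dead-end, i.e. two equal-dimensional fat faces whose intersection is a
codimension-1 non-fat face. -/
def UpsilonF (X : Finset (Finset ℕ)) (d k : ℕ) (η : ℝ) (A : Finset (Finset ℕ)) :
    Finset (Finset ℕ) :=
  (facesC X (k + 2)).filter fun p => ∃ i : ℤ, 0 ≤ i ∧ i ≤ (k : ℤ) ∧
    ∃ σ ∈ fatS X d k η A i, ∃ σ' ∈ fatS X d k η A i,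
      σ ⊆ p ∧ σ' ⊆ p ∧ σ'.card = σ.card ∧ (σ ∩ σ').card + 1 = σ.card ∧
      σ ∩ σ' ∉ fatS X d k η A (i - 1)


lemma weightC_nonneg (X : Finset (Finset ℕ)) (d : ℕ) (σ : Finset ℕ) : 0 ≤ weightC X d σ := by
  unfold weightC; positivity

lemma normC_nonneg (X : Finset (Finset ℕ)) (d : ℕ) (A : Finset (Finset ℕ)) : 0 ≤ normC X d A :=
  sum_nonneg fun σ _ => weightC_nonneg X d σ

lemma sdiff_injOn_supersets (σ : Finset ℕ) : Set.InjOn (· \ σ) {ρ : Finset ℕ | σ ⊆ ρ} := by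
  intro x hx y hy hxy
  rw [← sdiff_union_of_subset hx, ← sdiff_union_of_subset hy]
  exact congrArg (· ∪ σ) hxy

lemma filter_facesC_link (X : Finset (Finset ℕ)) {σ τ : Finset ℕ} (hστ : Disjoint σ τ) (t : ℕ) :
    (facesC (link X σ) t).filter (τ ⊆ ·) =
      ((facesC X (t + σ.card)).filter (σ ∪ τ ⊆ ·)).image (· \ σ) := by
  ext F
  simp only [facesC, link, mem_filter, mem_image, union_subset_iff]
  constructor
  · rintro ⟨⟨⟨ρ, ⟨hρX, hσρ⟩, rfl⟩, hcard⟩, hτ⟩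
    rw [card_sdiff_of_subset hσρ] at hcard
    have := card_le_card hσρ
    exact ⟨ρ, ⟨⟨hρX, by omega⟩, hσρ, hτ.trans sdiff_subset⟩, rfl⟩
  · rintro ⟨ρ, ⟨⟨hρX, hcard⟩, hσρ, hτρ⟩, rfl⟩
    refine ⟨⟨⟨ρ, ⟨hρX, hσρ⟩, rfl⟩, ?_⟩, subset_sdiff.mpr ⟨hτρ, hστ.symm⟩⟩
    rw [card_sdiff_of_subset hσρ]
    omega

lemma card_filter_facesC_link (X : Finset (Finset ℕ)) {σ τ : Finset ℕ} (hστ : Disjoint σ τ)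
    (t : ℕ) :
    ((facesC (link X σ) t).filter (τ ⊆ ·)).card =
      ((facesC X (t + σ.card)).filter (σ ∪ τ ⊆ ·)).card := by
  rw [filter_facesC_link X hστ]
  exact card_image_of_injOn fun x hx y hy =>
    sdiff_injOn_supersets σ (union_subset_iff.mp (mem_filter.mp hx).2).1
      (union_subset_iff.mp (mem_filter.mp hy).2).1

lemma weightC_mul_weightC_link (X : Finset (Finset ℕ)) (d : ℕ) {σ τ : Finset ℕ}
    (hστ : Disjoint σ τ) (hσ : σ.card ≤ d) (hστd : σ.card + τ.card ≤ d + 1) :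
    weightC X d σ * weightC (link X σ) (d - σ.card) τ =
      weightC X d (σ ∪ τ) / ((σ.card + τ.card).choose σ.card : ℝ) := by
  have hd : d - σ.card + 1 + σ.card = d + 1 := by omega
  have hlink := card_filter_facesC_link X (disjoint_empty_right σ) (d - σ.card + 1)
  have hlinkτ := card_filter_facesC_link X hστ (d - σ.card + 1)
  simp only [empty_subset, filter_true_of_mem, implies_true, union_empty, hd] at hlink hlinkτ
  unfold weightC
  rw [hlink, hlinkτ, card_union_of_disjoint hστ]
  set a := σ.card
  set b := τ.card
  set Nσ := ((facesC X (d + 1)).filter (σ ⊆ ·)).card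
  set Nστ := ((facesC X (d + 1)).filter (σ ∪ τ ⊆ ·)).card
  set N := (facesC X (d + 1)).card
  have hNστ : Nστ ≤ Nσ :=
    card_le_card <| monotone_filter_right _ fun _ _ h => subset_union_left.trans h
  rcases Nat.eq_zero_or_pos Nσ with hNσ | hNσ
  · simp [hNσ, show Nστ = 0 by omega]
  have hN : 0 < N := hNσ.trans_le (card_le_card (filter_subset _ _))
  have hchoose : ((d + 1).choose (a + b) * (a + b).choose a : ℝ) =
      (d + 1).choose a * (d - a + 1).choose b := by
    have h := Nat.choose_mul (n := d + 1) (k := a + b) (s := a) (by omega)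
    rw [show d + 1 - a = d - a + 1 by omega, Nat.add_sub_cancel_left] at h
    exact_mod_cast h
  have h1 : (0 : ℝ) < (d + 1).choose a := by exact_mod_cast Nat.choose_pos (by omega)
  have h2 : (0 : ℝ) < (d - a + 1).choose b := by exact_mod_cast Nat.choose_pos (by omega)
  have h3 : (0 : ℝ) < (d + 1).choose (a + b) := by exact_mod_cast Nat.choose_pos (by omega)
  have h4 : (0 : ℝ) < (a + b).choose a := by exact_mod_cast Nat.choose_pos (by omega)
  have hNσ' : (0 : ℝ) < Nσ := by exact_mod_cast hNσ
  have hN' : (0 : ℝ) < N := by exact_mod_cast hN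
  push_cast
  field_simp
  linear_combination (Nστ : ℝ) * hchoose

lemma weightC_mul_normC_locF (X : Finset (Finset ℕ)) (d m : ℕ) (hm : m ≤ d)
    {B : Finset (Finset ℕ)} (hB : B ⊆ facesC X (m + 1)) {σ : Finset ℕ} (hσ : σ.card = m) :
    weightC X d σ * normC (link X σ) (d - σ.card) (locF σ B) =
      ∑ ρ ∈ B.filter (σ ⊆ ·), weightC X d ρ / (m + 1) := by
  unfold normC locF
  rw [mul_sum, sum_image fun x hx y hy =>
    sdiff_injOn_supersets σ (mem_filter.mp hx : x ∈ B ∧ σ ⊆ x).2 (mem_filter.mp hy).2]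
  refine sum_congr rfl fun ρ hρ => ?_
  obtain ⟨hρB, hσρ⟩ := mem_filter.mp hρ
  have hρ : ρ.card = m + 1 := (mem_filter.mp (hB hρB)).2
  have hρσ : (ρ \ σ).card = 1 := by rw [card_sdiff_of_subset hσρ]; omega
  rw [weightC_mul_weightC_link X d disjoint_sdiff (by omega) (by omega),
    union_sdiff_of_subset hσρ, hρσ, hσ, Nat.choose_succ_self_right]
  push_cast
  rfl

lemma sum_weightC_mul_normC_locF (X : Finset (Finset ℕ)) (d m : ℕ)
    (hX : ∀ σ ∈ X, ∀ τ ⊆ σ, τ ∈ X) (hm : m ≤ d)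
    {B : Finset (Finset ℕ)} (hB : B ⊆ facesC X (m + 1)) :
    ∑ σ ∈ facesC X m, weightC X d σ * normC (link X σ) (d - σ.card) (locF σ B) =
      normC X d B := by
  have hfacets : ∀ σ ρ, σ ∈ facesC X m ∧ ρ ∈ B.filter (σ ⊆ ·) ↔
      σ ∈ ρ.powersetCard m ∧ ρ ∈ B := by
    intro σ ρ
    simp only [facesC, mem_filter, mem_powersetCard]
    constructor
    · rintro ⟨⟨-, hσ⟩, hρB, hσρ⟩
      exact ⟨⟨hσρ, hσ⟩, hρB⟩
    · rintro ⟨⟨hσρ, hσ⟩, hρB⟩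
      exact ⟨⟨hX ρ (mem_filter.mp (hB hρB)).1 σ hσρ, hσ⟩, hρB, hσρ⟩
  calc ∑ σ ∈ facesC X m, weightC X d σ * normC (link X σ) (d - σ.card) (locF σ B)
      = ∑ σ ∈ facesC X m, ∑ ρ ∈ B.filter (σ ⊆ ·), weightC X d ρ / (m + 1) :=
        sum_congr rfl fun σ hσ => weightC_mul_normC_locF X d m hm hB (mem_filter.mp hσ).2
    _ = ∑ ρ ∈ B, ∑ σ ∈ ρ.powersetCard m, weightC X d ρ / (m + 1) := sum_comm' hfacets
    _ = normC X d B := sum_congr rfl fun ρ hρ => ?_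
  rw [sum_const, card_powersetCard, (mem_filter.mp (hB hρ)).2, Nat.choose_succ_self_right,
    nsmul_eq_mul]
  push_cast
  field_simp

lemma normC_filter_mul_le (X : Finset (Finset ℕ)) (d m : ℕ) (hX : ∀ σ ∈ X, ∀ τ ⊆ σ, τ ∈ X)
    (hm : m ≤ d) {B : Finset (Finset ℕ)} (hB : B ⊆ facesC X (m + 1)) (t : ℝ) :
    normC X d ((facesC X m).filter fun σ => t ≤ normC (link X σ) (d - σ.card) (locF σ B)) * t ≤
      normC X d B := by
  rw [← sum_weightC_mul_normC_locF X d m hX hm hB, normC, sum_mul]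
  calc _ ≤ ∑ σ ∈ (facesC X m).filter fun σ => t ≤ normC (link X σ) (d - σ.card) (locF σ B),
        weightC X d σ * normC (link X σ) (d - σ.card) (locF σ B) :=
        sum_le_sum fun σ hσ => mul_le_mul_of_nonneg_left (mem_filter.mp hσ).2 (weightC_nonneg ..)
    _ ≤ _ := sum_le_sum_of_subset_of_nonneg (filter_subset _ _) fun σ _ _ =>
        mul_nonneg (weightC_nonneg ..) (normC_nonneg ..)

lemma fatD_subset_facesC (X : Finset (Finset ℕ)) (d kc : ℕ) (η : ℝ) {A : Finset (Finset ℕ)}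
    (hA : A ⊆ facesC X kc) : ∀ j, fatD X d kc η A j ⊆ facesC X (kc - j)
  | 0 => hA
  | _ + 1 => filter_subset _ _

lemma normC_fatD_succ_mul_le (X : Finset (Finset ℕ)) (d k : ℕ) (η : ℝ)
    (hX : ∀ σ ∈ X, ∀ τ ⊆ σ, τ ∈ X) (hk : k ≤ d) {A : Finset (Finset ℕ)}
    (hA : A ⊆ facesC X (k + 1)) {j : ℕ} (hj : j ≤ k) :
    normC X d (fatD X d (k + 1) η A (j + 1)) * η ^ 2 ^ j ≤ normC X d (fatD X d (k + 1) η A j) := by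
  have hS : fatD X d (k + 1) η A j ⊆ facesC X (k - j + 1) := by
    rw [show k - j + 1 = k + 1 - j by omega]
    exact fatD_subset_facesC X d (k + 1) η hA j
  rw [fatD, show k + 1 - (j + 1) = k - j by omega]
  exact normC_filter_mul_le X d (k - j) hX (by omega) hS _

lemma normC_fatD_mul_le (X : Finset (Finset ℕ)) (d k : ℕ) {η : ℝ} (hη : 0 ≤ η)
    (hX : ∀ σ ∈ X, ∀ τ ⊆ σ, τ ∈ X) (hk : k ≤ d) {A : Finset (Finset ℕ)}
    (hA : A ⊆ facesC X (k + 1)) :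
    ∀ j ≤ k + 1, normC X d (fatD X d (k + 1) η A j) * η ^ 2 ^ j ≤ normC X d A * η
  | 0, _ => by simp [fatD]
  | j + 1, hj => calc
    normC X d (fatD X d (k + 1) η A (j + 1)) * η ^ 2 ^ (j + 1)
      = normC X d (fatD X d (k + 1) η A (j + 1)) * η ^ 2 ^ j * η ^ 2 ^ j := by ring
    _ ≤ normC X d (fatD X d (k + 1) η A j) * η ^ 2 ^ j := by
      gcongr
      exact normC_fatD_succ_mul_le X d k η hX hk hA (by omega)
    _ ≤ normC X d A * η := normC_fatD_mul_le X d k hη hX hk hA j (by omega)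

lemma link_empty (X : Finset (Finset ℕ)) : link X ∅ = X := by
  simp [link]

lemma locF_empty (A : Finset (Finset ℕ)) : locF ∅ A = A := by
  simp [locF]

/-- If `‖A‖ < η^{2^{k+1}}` then the empty set is not fat. -/
theorem statement_11 (d k : ℕ) (hk : k ≤ d) (X : Finset (Finset ℕ)) (hX : IsComplex X d)
    (A : Finset (Finset ℕ)) (hA : A ⊆ facesC X (k + 1))
    (η : ℝ) (hη0 : 0 < η) (hη1 : η < 1)
    (hsmall : normC X d A < η ^ 2 ^ (k + 1)) :
    ∅ ∉ fatS X d k η A (-1) := by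
  intro hempty
  have hfat : η ^ 2 ^ k ≤ normC X d (fatD X d (k + 1) η A k) := by
    rw [fatS, show ((k : ℤ) - -1).toNat = k + 1 by omega, fatD, mem_filter, link_empty,
      locF_empty] at hempty
    simpa using hempty.2
  have hchain := normC_fatD_mul_le X d k hη0.le hX.2.1 hk hA k (by omega)
  have hbound : η ^ 2 ^ (k + 1) ≤ normC X d A * η := calc
    η ^ 2 ^ (k + 1) = η ^ 2 ^ k * η ^ 2 ^ k := by ring
    _ ≤ normC X d (fatD X d (k + 1) η A k) * η ^ 2 ^ k := by gcongr
    _ ≤ normC X d A * η := hchain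
  have hshrink : normC X d A * η ≤ normC X d A :=
    mul_le_of_le_one_right (normC_nonneg X d A) hη1.le
  linarith

end HDExpansion
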